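/- arXiv:2601.07452 — 4 statements merged into one kernel-verified Lean document; each statement's English description precedes it below -/
import Mathlib

section
/- Suppose x* ≠ x^V. Then there exists a direct segmentation (with its direct pricing rule) with consumer surplus u and producer surplus π* if and only if 0 ≤ u ≤ w* − π*. -/
open Finset

/-- A market: a probability vector over the `K` valuations. -/
def IsMarket (K : ℕ) (x : Fin K → ℝ) : Prop :=
  (∀ j, 0 ≤ x j) ∧ ∑ j, x j = 1

/-- Revenue from charging price `v k` in market `x`. -/
def rev {K : ℕ} (v x : Fin K → ℝ) (k : Fin K) : ℝ :=
  v k * ∑ j ∈ Finset.Ici k, x j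

/-- Price `v k` is optimal for market `x`. -/
def OptPrice {K : ℕ} (v x : Fin K → ℝ) (k : Fin K) : Prop :=
  ∀ i, rev v x i ≤ rev v x k

/-- A segmentation of the aggregate market `xstar`: a finitely supported probability
distribution on markets averaging to `xstar`. -/
def IsSegmentation {K : ℕ} (xstar : Fin K → ℝ) (σ : (Fin K → ℝ) →₀ ℝ) : Prop :=
  (∀ x, 0 ≤ σ x) ∧ (∑ x ∈ σ.support, σ x = 1) ∧
  (∀ x ∈ σ.support, IsMarket K x) ∧
  (∑ x ∈ σ.support, σ x • x = xstar)

/-- A pricing rule assigns a probability vector over prices to each market in the support. -/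
def IsPricingRule {K : ℕ} (σ : (Fin K → ℝ) →₀ ℝ) (φ : (Fin K → ℝ) → Fin K → ℝ) : Prop :=
  ∀ x ∈ σ.support, (∀ k, 0 ≤ φ x k) ∧ ∑ k, φ x k = 1

/-- A pricing rule is optimal if it only charges optimal prices. -/
def IsOptimalPricing {K : ℕ} (v : Fin K → ℝ) (σ : (Fin K → ℝ) →₀ ℝ)
    (φ : (Fin K → ℝ) → Fin K → ℝ) : Prop :=
  ∀ x ∈ σ.support, ∀ k, 0 < φ x k → OptPrice v x k

/-- Consumer surplus of a segmentation and pricing rule. -/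
def consumerSurplus {K : ℕ} (v : Fin K → ℝ) (σ : (Fin K → ℝ) →₀ ℝ)
    (φ : (Fin K → ℝ) → Fin K → ℝ) : ℝ :=
  ∑ x ∈ σ.support, σ x * ∑ k, φ x k * ∑ j ∈ Finset.Ici k, (v j - v k) * x j

/-- Producer surplus of a segmentation and pricing rule. -/
def producerSurplus {K : ℕ} (v : Fin K → ℝ) (σ : (Fin K → ℝ) →₀ ℝ)
    (φ : (Fin K → ℝ) → Fin K → ℝ) : ℝ :=
  ∑ x ∈ σ.support, σ x * ∑ k, φ x k * (v k * ∑ j ∈ Finset.Ici k, x j)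

/-- A direct segmentation: markets `xs k` for `k ∈ A`, pairwise distinct, with
`xs k ∈ X_k`, weights `w k > 0` summing to one and averaging to `xstar`. -/
def IsDirectSeg {K : ℕ} (v xstar : Fin K → ℝ) (A : Finset (Fin K))
    (xs : Fin K → Fin K → ℝ) (w : Fin K → ℝ) : Prop :=
  Set.InjOn xs (A : Set (Fin K)) ∧
  (∀ k ∈ A, IsMarket K (xs k)) ∧
  (∀ k ∈ A, OptPrice v (xs k) k) ∧
  (∀ k ∈ A, 0 < w k) ∧
  (∑ k ∈ A, w k = 1) ∧
  (∑ k ∈ A, w k • xs k = xstar)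

/-- Consumer surplus of a direct segmentation (with its direct pricing rule). -/
def directCS {K : ℕ} (v : Fin K → ℝ) (A : Finset (Fin K))
    (xs : Fin K → Fin K → ℝ) (w : Fin K → ℝ) : ℝ :=
  ∑ k ∈ A, w k * ∑ j ∈ Finset.Ici k, (v j - v k) * xs k j

/-- Producer surplus of a direct segmentation (with its direct pricing rule). -/
def directPS {K : ℕ} (v : Fin K → ℝ) (A : Finset (Fin K))
    (xs : Fin K → Fin K → ℝ) (w : Fin K → ℝ) : ℝ :=
  ∑ k ∈ A, w k * (v k * ∑ j ∈ Finset.Ici k, xs k j)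

/-- `x` is the characteristic market `x^S`: supported in `S`, and every price in `S`
yields the same revenue. -/
def IsCharMarket {K : ℕ} (v : Fin K → ℝ) (S : Finset (Fin K)) (x : Fin K → ℝ) : Prop :=
  IsMarket K x ∧ (∀ j ∉ S, x j = 0) ∧ ∀ i ∈ S, ∀ i' ∈ S, rev v x i = rev v x i'

/-- The joint distribution over valuations and prices induced by `(σ, φ)`:
mass of the pair `(v j, v k)`. -/
def jointDist {K : ℕ} (σ : (Fin K → ℝ) →₀ ℝ) (φ : (Fin K → ℝ) → Fin K → ℝ)
    (j k : Fin K) : ℝ :=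
  ∑ x ∈ σ.support, σ x * φ x k * x j

/-- The joint distribution over valuations and prices induced by a direct segmentation
with its direct pricing rule. -/
def directJoint {K : ℕ} (A : Finset (Fin K)) (xs : Fin K → Fin K → ℝ) (w : Fin K → ℝ)
    (j k : Fin K) : ℝ :=
  if k ∈ A then w k * xs k j else 0

/-- The total mass `m_k` of price `v k` under `(σ, φ)`. -/
noncomputable def mass {K : ℕ} (σ : (Fin K → ℝ) →₀ ℝ) (φ : (Fin K → ℝ) → Fin K → ℝ)
    (k : Fin K) : ℝ :=
  ∑ x ∈ σ.support, σ x * φ x k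

/-- The conditional market `x^k` given price `v k` under `(σ, φ)`. -/
noncomputable def condMarket {K : ℕ} (σ : (Fin K → ℝ) →₀ ℝ) (φ : (Fin K → ℝ) → Fin K → ℝ)
    (k : Fin K) : Fin K → ℝ :=
  (mass σ φ k)⁻¹ • ∑ x ∈ σ.support, (σ x * φ x k) • x

/-!
Fix a price `v i*` that is optimal for `x*`. Greedily peeling off the largest multiple of the
characteristic market of the current support writes `x* = ∑ t_s x^{S_s}` with `i* ∈ S_s`,
`S_0 = {1,…,K}` and the `x^{S_s}` linearly independent. Every price in `S_s` earns the same, maximal,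
revenue in `x^{S_s}`, so charging each segment a price of `S_s` and pooling the segments by price
yields producer surplus `π*`; by linear independence the pooled markets are distinct as soon as
distinct prices are charged on distinct sets of segments. Charging every segment its highest price
gives consumer surplus `0`, its lowest `w* - π*`. These two pricings are joined by moves that change
one segment at a time, along which consumer surplus is linear; the segment with `S_0` serves as a
bridge that keeps the pooled markets distinct, which needs a second segment, i.e. `x* ≠ x^V`.
Conversely, consumer surplus is nonnegative and total surplus is at most `w*`.
-/

section Surplus

variable {K : ℕ} (v : Fin K → ℝ)

def surplusAt (k : Fin K) : (Fin K → ℝ) →ₗ[ℝ] ℝ :=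
  ∑ j ∈ Ici k, (v j - v k) • LinearMap.proj j

def revenueAt (k : Fin K) : (Fin K → ℝ) →ₗ[ℝ] ℝ :=
  v k • ∑ j ∈ Ici k, LinearMap.proj j

lemma surplusAt_apply (k : Fin K) (y : Fin K → ℝ) :
    surplusAt v k y = ∑ j ∈ Ici k, (v j - v k) * y j := by
  simp [surplusAt, LinearMap.sum_apply]

lemma revenueAt_apply (k : Fin K) (y : Fin K → ℝ) : revenueAt v k y = rev v y k := by
  simp [revenueAt, rev, LinearMap.sum_apply]

lemma directCS_eq (A : Finset (Fin K)) (xs : Fin K → Fin K → ℝ) (w : Fin K → ℝ) :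
    directCS v A xs w = ∑ k ∈ A, w k * surplusAt v k (xs k) := by
  simp only [directCS, surplusAt_apply]

lemma directPS_eq (A : Finset (Fin K)) (xs : Fin K → Fin K → ℝ) (w : Fin K → ℝ) :
    directPS v A xs w = ∑ k ∈ A, w k * revenueAt v k (xs k) := by
  simp only [directPS, revenueAt_apply, rev]

lemma surplusAt_add_revenueAt (k : Fin K) (y : Fin K → ℝ) :
    surplusAt v k y + revenueAt v k y = ∑ j ∈ Ici k, v j * y j := by
  rw [surplusAt_apply, revenueAt_apply, rev, mul_sum, ← sum_add_distrib]
  exact sum_congr rfl fun j _ => by ring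

lemma surplusAt_nonneg (hv : Monotone v) {y : Fin K → ℝ} (hy : ∀ j, 0 ≤ y j) (k : Fin K) :
    0 ≤ surplusAt v k y := by
  rw [surplusAt_apply]
  exact sum_nonneg fun j hj => mul_nonneg (sub_nonneg.2 (hv (mem_Ici.1 hj))) (hy j)

lemma surplusAt_add_revenueAt_le (hv0 : ∀ j, 0 ≤ v j) {y : Fin K → ℝ} (hy : ∀ j, 0 ≤ y j)
    (k : Fin K) : surplusAt v k y + revenueAt v k y ≤ v ⬝ᵥ y := by
  rw [surplusAt_add_revenueAt]
  exact sum_le_sum_of_subset_of_nonneg (subset_univ _) fun j _ _ => mul_nonneg (hv0 j) (hy j)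

lemma surplusAt_add_revenueAt_eq (k : Fin K) {y : Fin K → ℝ} (hy : ∀ j < k, y j = 0) :
    surplusAt v k y + revenueAt v k y = v ⬝ᵥ y := by
  rw [surplusAt_add_revenueAt, dotProduct]
  refine sum_subset (subset_univ _) fun j _ hj => ?_
  rw [hy j (not_le.1 fun h => hj (mem_Ici.2 h)), mul_zero]

lemma surplusAt_eq_zero (k : Fin K) {y : Fin K → ℝ} (hy : ∀ j, k < j → y j = 0) :
    surplusAt v k y = 0 := by
  rw [surplusAt_apply]
  refine sum_eq_zero fun j hj => ?_
  rcases (mem_Ici.1 hj).eq_or_lt with rfl | hkj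
  · rw [sub_self, zero_mul]
  · rw [hy j hkj, mul_zero]

end Surplus

section Forward

variable {K : ℕ} {v xstar : Fin K → ℝ} {A : Finset (Fin K)} {xs : Fin K → Fin K → ℝ}
  {w : Fin K → ℝ}

lemma IsDirectSeg.directCS_nonneg (hv : Monotone v) (h : IsDirectSeg v xstar A xs w) :
    0 ≤ directCS v A xs w := by
  obtain ⟨-, hmarket, -, hw, -⟩ := h
  rw [directCS_eq]
  exact sum_nonneg fun k hk => mul_nonneg (hw k hk).le (surplusAt_nonneg v hv (hmarket k hk).1 k)

lemma IsDirectSeg.directCS_add_directPS_le (hv0 : ∀ j, 0 ≤ v j)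
    (h : IsDirectSeg v xstar A xs w) : directCS v A xs w + directPS v A xs w ≤ v ⬝ᵥ xstar := by
  obtain ⟨-, hmarket, -, hw, -, hsum⟩ := h
  rw [directCS_eq, directPS_eq, ← sum_add_distrib, ← hsum, dotProduct_sum]
  refine sum_le_sum fun k hk => ?_
  rw [← mul_add, dotProduct_smul, smul_eq_mul]
  exact mul_le_mul_of_nonneg_left
    (surplusAt_add_revenueAt_le v hv0 (hmarket k hk).1 k) (hw k hk).le

end Forward

section Tails

variable {α : Type*} [LinearOrder α] [LocallyFiniteOrderTop α]

lemma Finset.Ioi_eq_empty_or_eq_Ici (i : α) : Ioi i = ∅ ∨ ∃ m, i < m ∧ Ioi i = Ici m := by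
  rcases (Ioi i).eq_empty_or_nonempty with h | h
  · exact Or.inl h
  refine Or.inr ⟨(Ioi i).min' h, mem_Ioi.1 ((Ioi i).min'_mem h), ?_⟩
  ext k
  refine ⟨fun hk => mem_Ici.2 ((Ioi i).min'_le k hk), fun hk => ?_⟩
  exact mem_Ioi.2 ((mem_Ioi.1 ((Ioi i).min'_mem h)).trans_le (mem_Ici.1 hk))

lemma eq_of_sum_Ici_eq {y y' : α → ℝ} (h : ∀ i, ∑ j ∈ Ici i, y j = ∑ j ∈ Ici i, y' j) :
    y = y' := by
  classical
  have hIoi : ∀ i, ∑ j ∈ Ioi i, y j = ∑ j ∈ Ioi i, y' j := fun i => by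
    rcases Ioi_eq_empty_or_eq_Ici i with hi | ⟨m, -, hi⟩ <;> simp [hi, h]
  funext i
  have := h i
  rw [← Ioi_insert, sum_insert (by simp), sum_insert (by simp), hIoi] at this
  linarith

lemma sum_Ici_sub_Ioi [WellFoundedGT α] (F : Finset α → ℝ) (hF : F ∅ = 0) (i : α) :
    ∑ j ∈ Ici i, (F (Ici j) - F (Ioi j)) = F (Ici i) := by
  classical
  induction i using WellFoundedGT.induction with
  | _ i ih =>
    have hIoi : ∑ j ∈ Ioi i, (F (Ici j) - F (Ioi j)) = F (Ioi i) := by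
      rcases Ioi_eq_empty_or_eq_Ici i with hi | ⟨m, him, hi⟩
      · rw [hi, sum_empty, hF]
      · rw [hi, ih m him]
    rw [← Ioi_insert, sum_insert (by simp), hIoi, Ioi_insert, sub_add_cancel]

end Tails

section Support

variable {K : ℕ} (v : Fin K → ℝ) {S : Finset (Fin K)} {y : Fin K → ℝ}

lemma sum_Ici_eq_sum_Ici_min' (hy : ∀ j ∉ S, y j = 0) {i : Fin K} (h : (S ∩ Ici i).Nonempty) :
    ∑ j ∈ Ici i, y j = ∑ j ∈ Ici ((S ∩ Ici i).min' h), y j := by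
  have hmem := mem_inter.1 ((S ∩ Ici i).min'_mem h)
  refine (sum_subset (Ici_subset_Ici.2 (mem_Ici.1 hmem.2)) fun j hj hjm => hy j fun hjS => ?_).symm
  exact hjm (mem_Ici.2 ((S ∩ Ici i).min'_le j (mem_inter.2 ⟨hjS, hj⟩)))

lemma sum_Ici_eq_zero_of_inter_eq_empty (hy : ∀ j ∉ S, y j = 0) {i : Fin K}
    (h : S ∩ Ici i = ∅) : ∑ j ∈ Ici i, y j = 0 :=
  sum_eq_zero fun j hj => hy j fun hjS => by simpa [h] using mem_inter.2 ⟨hjS, hj⟩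

lemma exists_rev_le_of_eq_zero (hv0 : ∀ k, 0 ≤ v k) (hv : Monotone v) (hy0 : ∀ j, 0 ≤ y j)
    (hy : ∀ j ∉ S, y j = 0) (hS : S.Nonempty) (i : Fin K) : ∃ k ∈ S, rev v y i ≤ rev v y k := by
  rcases (S ∩ Ici i).eq_empty_or_nonempty with h | h
  · obtain ⟨k, hk⟩ := hS
    refine ⟨k, hk, ?_⟩
    rw [rev, sum_Ici_eq_zero_of_inter_eq_empty hy h, mul_zero]
    exact mul_nonneg (hv0 k) (sum_nonneg fun j _ => hy0 j)
  · have hmem := mem_inter.1 ((S ∩ Ici i).min'_mem h)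
    refine ⟨_, hmem.1, ?_⟩
    rw [rev, rev, sum_Ici_eq_sum_Ici_min' hy h]
    exact mul_le_mul_of_nonneg_right (hv (mem_Ici.1 hmem.2)) (sum_nonneg fun j _ => hy0 j)

lemma exists_rev_lt_of_notMem (hv0 : ∀ k, 0 < v k) (hv : StrictMono v) (hy0 : ∀ j, 0 ≤ y j)
    (hpos : ∀ j ∈ S, 0 < y j) (hy : ∀ j ∉ S, y j = 0) (hS : S.Nonempty) {i : Fin K}
    (hi : i ∉ S) : ∃ k ∈ S, rev v y i < rev v y k := by
  have htail : ∀ k ∈ S, 0 < ∑ j ∈ Ici k, y j := fun k hk =>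
    (hpos k hk).trans_le (single_le_sum (fun j _ => hy0 j) (mem_Ici.2 le_rfl))
  rcases (S ∩ Ici i).eq_empty_or_nonempty with h | h
  · obtain ⟨k, hk⟩ := hS
    refine ⟨k, hk, ?_⟩
    rw [rev, sum_Ici_eq_zero_of_inter_eq_empty hy h, mul_zero]
    exact mul_pos (hv0 k) (htail k hk)
  · have hmem := mem_inter.1 ((S ∩ Ici i).min'_mem h)
    have hlt : i < (S ∩ Ici i).min' h :=
      (mem_Ici.1 hmem.2).lt_of_ne fun he => hi (he ▸ hmem.1)
    refine ⟨_, hmem.1, ?_⟩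
    rw [rev, rev, sum_Ici_eq_sum_Ici_min' hy h]
    exact mul_lt_mul_of_pos_right (hv hlt) (htail _ hmem.1)

lemma optPrice_of_forall_mem (hv0 : ∀ k, 0 ≤ v k) (hv : Monotone v) (hy0 : ∀ j, 0 ≤ y j)
    (hy : ∀ j ∉ S, y j = 0) (hS : S.Nonempty) {k₀ : Fin K}
    (hk₀ : ∀ k ∈ S, rev v y k ≤ rev v y k₀) : OptPrice v y k₀ := fun i => by
  obtain ⟨k, hk, hle⟩ := exists_rev_le_of_eq_zero v hv0 hv hy0 hy hS i
  exact hle.trans (hk₀ k hk)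

end Support

section CharMarket

variable {K : ℕ} (v : Fin K → ℝ)

noncomputable def invMinVal (T : Finset (Fin K)) : ℝ :=
  if h : T.Nonempty then (v (T.min' h))⁻¹ else 0

/-- `x^S` up to normalisation: its tail sum from `i` is `1 / v k` for the least `k ∈ S` with
`i ≤ k`, so every price in `S` earns the same revenue. -/
noncomputable def charShape (S : Finset (Fin K)) (j : Fin K) : ℝ :=
  invMinVal v (S ∩ Ici j) - invMinVal v (S ∩ Ioi j)

noncomputable def charMarket (S : Finset (Fin K)) : Fin K → ℝ :=
  (∑ j, charShape v S j)⁻¹ • charShape v S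

variable {v} {S : Finset (Fin K)}

lemma invMinVal_inter_Ici_of_mem {j : Fin K} (hj : j ∈ S) : invMinVal v (S ∩ Ici j) = (v j)⁻¹ := by
  have h : (S ∩ Ici j).Nonempty := ⟨j, mem_inter.2 ⟨hj, mem_Ici.2 le_rfl⟩⟩
  have hmin : (S ∩ Ici j).min' h = j :=
    le_antisymm ((S ∩ Ici j).min'_le j (mem_inter.2 ⟨hj, mem_Ici.2 le_rfl⟩))
      (mem_Ici.1 (mem_inter.1 ((S ∩ Ici j).min'_mem h)).2)
  rw [invMinVal, dif_pos h, hmin]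

lemma charShape_eq_zero {j : Fin K} (hj : j ∉ S) : charShape v S j = 0 := by
  rw [charShape, ← Ioi_insert, inter_insert_of_notMem hj, sub_self]

lemma sum_Ici_charShape (i : Fin K) : ∑ j ∈ Ici i, charShape v S j = invMinVal v (S ∩ Ici i) :=
  sum_Ici_sub_Ioi (fun T => invMinVal v (S ∩ T)) (by simp [invMinVal]) i

variable (hv0 : ∀ k, 0 < v k) (hv : StrictMono v)
include hv0 hv

lemma charShape_pos {j : Fin K} (hj : j ∈ S) : 0 < charShape v S j := by
  rw [charShape, invMinVal_inter_Ici_of_mem hj, sub_pos, invMinVal]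
  split_ifs with h
  · exact (inv_lt_inv₀ (hv0 _) (hv0 j)).2 (hv (mem_Ioi.1 (mem_inter.1 ((S ∩ Ioi j).min'_mem h)).2))
  · exact inv_pos.2 (hv0 j)

lemma charShape_nonneg (j : Fin K) : 0 ≤ charShape v S j := by
  by_cases hj : j ∈ S
  · exact (charShape_pos hv0 hv hj).le
  · exact (charShape_eq_zero hj).ge

lemma sum_charShape_pos (hS : S.Nonempty) : 0 < ∑ j, charShape v S j := by
  obtain ⟨k, hk⟩ := hS
  exact (charShape_pos hv0 hv hk).trans_le
    (single_le_sum (fun j _ => charShape_nonneg hv0 hv j) (mem_univ k))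

lemma isMarket_charMarket (hS : S.Nonempty) : IsMarket K (charMarket v S) := by
  have hM := sum_charShape_pos hv0 hv hS
  refine ⟨fun j => mul_nonneg (inv_nonneg.2 hM.le) (charShape_nonneg hv0 hv j), ?_⟩
  simp only [charMarket, Pi.smul_apply, smul_eq_mul, ← mul_sum]
  exact inv_mul_cancel₀ hM.ne'

lemma charMarket_pos (hS : S.Nonempty) {j : Fin K} (hj : j ∈ S) : 0 < charMarket v S j :=
  mul_pos (inv_pos.2 (sum_charShape_pos hv0 hv hS)) (charShape_pos hv0 hv hj)

omit hv0 hv in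
lemma charMarket_eq_zero {j : Fin K} (hj : j ∉ S) : charMarket v S j = 0 := by
  simp [charMarket, charShape_eq_zero hj]

omit hv in
lemma rev_charMarket {k : Fin K} (hk : k ∈ S) :
    rev v (charMarket v S) k = (∑ j, charShape v S j)⁻¹ := by
  simp only [rev, charMarket, Pi.smul_apply, smul_eq_mul, ← mul_sum, sum_Ici_charShape,
    invMinVal_inter_Ici_of_mem hk]
  field_simp [(hv0 k).ne']

lemma optPrice_charMarket (hS : S.Nonempty) {k : Fin K} (hk : k ∈ S) :
    OptPrice v (charMarket v S) k :=
  optPrice_of_forall_mem v (fun k => (hv0 k).le) hv.monotone (isMarket_charMarket hv0 hv hS).1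
    (fun _ hj => charMarket_eq_zero hj) hS fun k' hk' => by
      rw [rev_charMarket hv0 hk', rev_charMarket hv0 hk]

end CharMarket

lemma IsCharMarket.eq_of_univ {K : ℕ} {v y y' : Fin K → ℝ} (hv0 : ∀ k, 0 < v k)
    (hy : IsCharMarket v univ y) (hy' : IsCharMarket v univ y') : y = y' := by
  have hrev : ∀ z, IsCharMarket v univ z → ∀ i : Fin K, rev v z i = v ⟨0, i.pos⟩ := by
    intro z hz i
    have hIci : Ici (⟨0, i.pos⟩ : Fin K) = univ := by ext j; simp [Fin.le_def]
    rw [hz.2.2 i (mem_univ i) _ (mem_univ _), rev, hIci, hz.1.2, mul_one]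
  refine eq_of_sum_Ici_eq fun i => mul_left_cancel₀ (hv0 i).ne' ?_
  rw [← rev, ← rev, hrev y hy i, hrev y' hy' i]

section Greedy

variable {K : ℕ} {v : Fin K → ℝ}

open Classical in
noncomputable def supportFinset (g : Fin K → ℝ) : Finset (Fin K) :=
  univ.filter fun j => g j ≠ 0

lemma mem_supportFinset_iff {g : Fin K → ℝ} {j : Fin K} : j ∈ supportFinset g ↔ g j ≠ 0 := by
  simp [supportFinset]

lemma notMem_supportFinset_iff {g : Fin K → ℝ} {j : Fin K} : j ∉ supportFinset g ↔ g j = 0 := by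
  simp [supportFinset]

variable (hv0 : ∀ k, 0 < v k) (hv : StrictMono v)
include hv0 hv

lemma OptPrice.mem_supportFinset {g : Fin K → ℝ} {i : Fin K} (hopt : OptPrice v g i)
    (hg : ∀ j, 0 ≤ g j) (hne : (supportFinset g).Nonempty) : i ∈ supportFinset g := by
  by_contra hi
  obtain ⟨k, -, hk⟩ := exists_rev_lt_of_notMem v hv0 hv hg
    (fun j hj => (hg j).lt_of_ne (mem_supportFinset_iff.1 hj).symm)
    (fun j hj => notMem_supportFinset_iff.1 hj) hne hi
  exact (hopt k).not_gt hk

/-- One greedy step: remove from `g` the largest multiple of `x^S`, `S = supp g`, that keeps it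
nonnegative. Since all prices in `S` earn the same revenue in `x^S`, `i` stays optimal. -/
lemma OptPrice.exists_eq_smul_charMarket_add {g : Fin K → ℝ} {i : Fin K} (hopt : OptPrice v g i)
    (hg : ∀ j, 0 ≤ g j) (hne : (supportFinset g).Nonempty) :
    ∃ τ : ℝ, 0 < τ ∧ ∃ g', g = τ • charMarket v (supportFinset g) + g' ∧ (∀ j, 0 ≤ g' j) ∧
      supportFinset g' ⊂ supportFinset g ∧ OptPrice v g' i := by
  set S := supportFinset g
  set x := charMarket v S
  have hgpos : ∀ j ∈ S, 0 < g j := fun j hj =>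
    (hg j).lt_of_ne (mem_supportFinset_iff.1 hj).symm
  have hxpos : ∀ j ∈ S, 0 < x j := fun j hj => charMarket_pos hv0 hv hne hj
  set τ := S.inf' hne fun j => g j / x j
  have hτ : 0 < τ := (lt_inf'_iff hne).2 fun j hj => div_pos (hgpos j hj) (hxpos j hj)
  have hg'S : ∀ j ∉ S, (g - τ • x) j = 0 := fun j hj => by
    simp [notMem_supportFinset_iff.1 hj, x, charMarket_eq_zero hj]
  have hg'0 : ∀ j, 0 ≤ (g - τ • x) j := fun j => by
    by_cases hj : j ∈ S
    · have := (le_div_iff₀ (hxpos j hj)).1 (inf'_le (fun j => g j / x j) hj)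
      simpa using this
    · exact (hg'S j hj).ge
  have hsub : supportFinset (g - τ • x) ⊂ S := by
    obtain ⟨j₀, hj₀, hτj₀⟩ := exists_mem_eq_inf' hne fun j => g j / x j
    refine ssubset_iff_of_subset (fun j hj => ?_) |>.2 ⟨j₀, hj₀, ?_⟩
    · by_contra hjS
      exact mem_supportFinset_iff.1 hj (hg'S j hjS)
    · rw [notMem_supportFinset_iff, Pi.sub_apply, Pi.smul_apply, smul_eq_mul,
        show τ = g j₀ / x j₀ from hτj₀, div_mul_cancel₀ _ (hxpos j₀ hj₀).ne', sub_self]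
  have hiS := hopt.mem_supportFinset hv0 hv hg hne
  refine ⟨τ, hτ, g - τ • x, by abel, hg'0, hsub,
    optPrice_of_forall_mem v (fun k => (hv0 k).le) hv.monotone hg'0 hg'S hne fun k hk => ?_⟩
  have hrev : ∀ k, rev v (g - τ • x) k = rev v g k - τ * rev v x k := fun k => by
    rw [← revenueAt_apply, map_sub, map_smul, smul_eq_mul, revenueAt_apply, revenueAt_apply]
  rw [hrev, hrev, rev_charMarket hv0 hk, rev_charMarket hv0 hiS]
  linarith [hopt k]

/-- The markets are linearly independent because each greedy step kills a coordinate on which the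
market removed at that step is positive. -/
theorem OptPrice.exists_charMarket_decomposition {i : Fin K} {g : Fin K → ℝ}
    (hopt : OptPrice v g i) (hg : ∀ j, 0 ≤ g j) :
    ∃ (n : ℕ) (t : Fin n → ℝ) (S : Fin n → Finset (Fin K)),
      (∀ s, 0 < t s) ∧ (∀ s, i ∈ S s) ∧ (∀ s, S s ⊆ supportFinset g) ∧
      (g ≠ 0 → ∃ b, S b = supportFinset g) ∧ LinearIndependent ℝ (charMarket v ∘ S) ∧
      ∑ s, t s • charMarket v (S s) = g := by
  induction hcard : (supportFinset g).card using Nat.strong_induction_on generalizing g with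
  | _ N ih =>
  rcases (supportFinset g).eq_empty_or_nonempty with hempty | hne
  · have hg0 : g = 0 := funext fun j => notMem_supportFinset_iff.1 (by simp [hempty])
    exact ⟨0, Fin.elim0, Fin.elim0, Fin.rec0, Fin.rec0, Fin.rec0, fun h => (h hg0).elim,
      linearIndependent_empty_type, by simp [hg0]⟩
  obtain ⟨τ, hτ, g', hgg', hg', hsub, hopt'⟩ := hopt.exists_eq_smul_charMarket_add hv0 hv hg hne
  obtain ⟨n, t, S, ht, hi, hS, -, hlin, hsum⟩ :=
    ih _ (hcard ▸ card_lt_card hsub) hopt' hg' rfl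
  obtain ⟨j₀, hj₀, hj₀'⟩ := exists_of_ssubset hsub
  refine ⟨n + 1, Fin.cons τ t, Fin.cons (supportFinset g) S, Fin.cases hτ ht,
    Fin.cases (hopt.mem_supportFinset hv0 hv hg hne) hi,
    Fin.cases subset_rfl fun s => (hS s).trans hsub.subset, fun _ => ⟨0, rfl⟩, ?_, ?_⟩
  · rw [Fin.comp_cons, linearIndependent_finCons]
    refine ⟨hlin, fun hspan => (charMarket_pos hv0 hv hne hj₀).ne' ?_⟩
    have hle :
        Submodule.span ℝ (Set.range (charMarket v ∘ S)) ≤ LinearMap.ker (LinearMap.proj j₀) :=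
      Submodule.span_le.2 <| Set.range_subset_iff.2 fun s =>
        charMarket_eq_zero fun h => hj₀' (hS s h)
    exact hle hspan
  · rw [Fin.sum_univ_succ]
    simp only [Fin.cons_zero, Fin.cons_succ, hsum, ← hgg']

end Greedy

section Pooling

variable {K : ℕ} {ι : Type*} [Fintype ι]

/-- `S s` is the set of prices that segment `z s` may be charged. -/
structure IsPriceDecomposition (v xstar : Fin K → ℝ) (istar : Fin K) (t : ι → ℝ)
    (z : ι → Fin K → ℝ) (S : ι → Finset (Fin K)) : Prop where
  isMarket : ∀ s, IsMarket K (z s)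
  pos : ∀ s, 0 < t s
  sum_eq_one : ∑ s, t s = 1
  sum_smul : ∑ s, t s • z s = xstar
  linearIndependent : LinearIndependent ℝ z
  optPrice : ∀ s, ∀ k ∈ S s, OptPrice v (z s) k
  mem : ∀ s, istar ∈ S s

lemma IsPriceDecomposition.rev_eq {v xstar : Fin K → ℝ} {istar : Fin K} {t : ι → ℝ}
    {z : ι → Fin K → ℝ} {S : ι → Finset (Fin K)} (hD : IsPriceDecomposition v xstar istar t z S)
    {s : ι} {k : Fin K} (hk : k ∈ S s) : rev v (z s) k = rev v (z s) istar :=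
  le_antisymm (hD.optPrice s istar (hD.mem s) k) (hD.optPrice s k hk istar)

variable (t : ι → ℝ) (c : ι → Fin K → ℝ) (z : ι → Fin K → ℝ)

def pooledWeight (k : Fin K) : ℝ := ∑ s, t s * c s k

/-- The market of consumers charged `v k` when segment `s` is charged `v k` with
probability `c s k`. -/
noncomputable def pooledMarket (k : Fin K) : Fin K → ℝ :=
  (pooledWeight t c k)⁻¹ • ∑ s, (t s * c s k) • z s

noncomputable def pooledPrices : Finset (Fin K) := univ.filter fun k => pooledWeight t c k ≠ 0

variable {t c z}

lemma exists_pos_of_mem_pooledPrices (hc : ∀ s k, 0 ≤ c s k) {k : Fin K}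
    (hk : k ∈ pooledPrices t c) : ∃ s, 0 < c s k := by
  obtain ⟨s, -, hs⟩ := exists_ne_zero_of_sum_ne_zero (mem_filter.1 hk).2
  exact ⟨s, (hc s k).lt_of_ne (right_ne_zero_of_mul hs).symm⟩

lemma pooledWeight_smul_pooledMarket (ht : ∀ s, 0 ≤ t s) (hc : ∀ s k, 0 ≤ c s k) (k : Fin K) :
    pooledWeight t c k • pooledMarket t c z k = ∑ s, (t s * c s k) • z s := by
  by_cases hk : pooledWeight t c k = 0
  · have h0 := (sum_eq_zero_iff_of_nonneg fun s _ => mul_nonneg (ht s) (hc s k)).1 hk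
    simp [hk, h0]
  · exact smul_inv_smul₀ hk _

lemma sum_pooledWeight_mul (ht : ∀ s, 0 ≤ t s) (hc : ∀ s k, 0 ≤ c s k)
    (f : Fin K → (Fin K → ℝ) →ₗ[ℝ] ℝ) :
    ∑ k ∈ pooledPrices t c, pooledWeight t c k * f k (pooledMarket t c z k) =
      ∑ s, t s * ∑ k, c s k * f k (z s) := by
  rw [pooledPrices, sum_filter_of_ne fun k _ h => left_ne_zero_of_mul h]
  simp_rw [← smul_eq_mul, ← map_smul, pooledWeight_smul_pooledMarket ht hc, map_sum, map_smul,
    smul_eq_mul, mul_sum, mul_assoc]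
  exact sum_comm

variable {v xstar : Fin K → ℝ} {istar : Fin K} {S : ι → Finset (Fin K)}
  (hD : IsPriceDecomposition v xstar istar t z S) (hc : ∀ s k, 0 ≤ c s k)
  (hcsum : ∀ s, ∑ k, c s k = 1) (hcS : ∀ s k, 0 < c s k → k ∈ S s)
include hD hc

lemma IsPriceDecomposition.pooledWeight_pos {k : Fin K} (hk : k ∈ pooledPrices t c) :
    0 < pooledWeight t c k :=
  (sum_nonneg fun s _ => mul_nonneg (hD.pos s).le (hc s k)).lt_of_ne (mem_filter.1 hk).2.symm

lemma IsPriceDecomposition.pos_iff_of_pooledMarket_eq {k k' : Fin K} (hk : k ∈ pooledPrices t c)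
    (hk' : k' ∈ pooledPrices t c) (h : pooledMarket t c z k = pooledMarket t c z k') (s : ι) :
    0 < c s k ↔ 0 < c s k' := by
  have hcoef : ∀ k, pooledMarket t c z k = ∑ s, ((pooledWeight t c k)⁻¹ * (t s * c s k)) • z s :=
    fun k => by simp only [pooledMarket, smul_sum, smul_smul]
  have heq := Fintype.linearIndependent_iff.1 hD.linearIndependent
    (fun s => (pooledWeight t c k)⁻¹ * (t s * c s k) - (pooledWeight t c k')⁻¹ * (t s * c s k'))
    (by simp only [sub_smul, sum_sub_distrib, ← hcoef, h, sub_self]) s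
  have hpos : ∀ k ∈ pooledPrices t c, 0 < c s k ↔ 0 < (pooledWeight t c k)⁻¹ * (t s * c s k) :=
    fun k hk => by
      rw [mul_pos_iff_of_pos_left (inv_pos.2 (hD.pooledWeight_pos hc hk)),
        mul_pos_iff_of_pos_left (hD.pos s)]
  rw [hpos k hk, hpos k' hk', sub_eq_zero.1 heq]

lemma IsPriceDecomposition.isMarket_pooledMarket {k : Fin K} (hk : k ∈ pooledPrices t c) :
    IsMarket K (pooledMarket t c z k) := by
  have hW := hD.pooledWeight_pos hc hk
  refine ⟨fun j => ?_, ?_⟩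
  · simp only [pooledMarket, Pi.smul_apply, Finset.sum_apply, smul_eq_mul]
    exact mul_nonneg (inv_nonneg.2 hW.le) (sum_nonneg fun s _ =>
      mul_nonneg (mul_nonneg (hD.pos s).le (hc s k)) ((hD.isMarket s).1 j))
  · simp only [pooledMarket, Pi.smul_apply, Finset.sum_apply, smul_eq_mul]
    rw [← mul_sum, sum_comm]
    simp only [← mul_sum, (hD.isMarket _).2, mul_one]
    exact inv_mul_cancel₀ hW.ne'

include hcS in
lemma IsPriceDecomposition.optPrice_pooledMarket {k : Fin K} (hk : k ∈ pooledPrices t c) :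
    OptPrice v (pooledMarket t c z k) k := fun i => by
  simp only [← revenueAt_apply, pooledMarket, map_smul, map_sum, smul_eq_mul]
  refine mul_le_mul_of_nonneg_left (sum_le_sum fun s _ => ?_)
    (inv_nonneg.2 (hD.pooledWeight_pos hc hk).le)
  rcases (hc s k).eq_or_lt with h | h
  · simp [← h]
  · simp only [revenueAt_apply]
    exact mul_le_mul_of_nonneg_left (hD.optPrice s k (hcS s k h) i)
      (mul_nonneg (hD.pos s).le h.le)

include hcsum

omit hc in
lemma IsPriceDecomposition.sum_pooledWeight : ∑ k ∈ pooledPrices t c, pooledWeight t c k = 1 := by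
  rw [pooledPrices, sum_filter_ne_zero]
  simp only [pooledWeight]
  rw [sum_comm]
  simp only [← mul_sum, hcsum, mul_one, hD.sum_eq_one]

lemma IsPriceDecomposition.sum_pooledWeight_smul :
    ∑ k ∈ pooledPrices t c, pooledWeight t c k • pooledMarket t c z k = xstar := by
  rw [pooledPrices, sum_filter_of_ne fun k _ h => left_ne_zero_of_smul h]
  simp only [pooledWeight_smul_pooledMarket (fun s => (hD.pos s).le) hc]
  rw [sum_comm]
  simp only [← Finset.sum_smul, ← mul_sum, hcsum, mul_one, hD.sum_smul]

include hcS

lemma IsPriceDecomposition.isDirectSeg_pooled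
    (hsep : ∀ k ∈ pooledPrices t c, ∀ k' ∈ pooledPrices t c,
      (∀ s, 0 < c s k ↔ 0 < c s k') → k = k') :
    IsDirectSeg v xstar (pooledPrices t c) (pooledMarket t c z) (pooledWeight t c) :=
  ⟨fun k hk k' hk' h => hsep k hk k' hk' (hD.pos_iff_of_pooledMarket_eq hc hk hk' h),
    fun _ hk => hD.isMarket_pooledMarket hc hk, fun _ hk => hD.optPrice_pooledMarket hc hcS hk,
    fun _ hk => hD.pooledWeight_pos hc hk, hD.sum_pooledWeight hcsum,
    hD.sum_pooledWeight_smul hc hcsum⟩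

lemma IsPriceDecomposition.directPS_pooled :
    directPS v (pooledPrices t c) (pooledMarket t c z) (pooledWeight t c) = rev v xstar istar := by
  rw [directPS_eq, sum_pooledWeight_mul (fun s => (hD.pos s).le) hc, ← hD.sum_smul,
    ← revenueAt_apply, map_sum]
  refine sum_congr rfl fun s _ => ?_
  have hrev : ∀ k, c s k * revenueAt v k (z s) = c s k * revenueAt v istar (z s) := fun k => by
    rcases (hc s k).eq_or_lt with h | h
    · rw [← h, zero_mul, zero_mul]
    · simp only [revenueAt_apply, hD.rev_eq (hcS s k h)]
  rw [sum_congr rfl fun k _ => hrev k, ← sum_mul, hcsum, one_mul, map_smul, smul_eq_mul]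

end Pooling

section Mixing

variable {K : ℕ} {ι : Type*} {p p' : ι → Fin K} {θ : ℝ}

def mixCoeff (p p' : ι → Fin K) (θ : ℝ) (s : ι) (k : Fin K) : ℝ :=
  (1 - θ) * (if p s = k then 1 else 0) + θ * (if p' s = k then 1 else 0)

lemma mixCoeff_nonneg (hθ0 : 0 ≤ θ) (hθ1 : θ ≤ 1) (s : ι) (k : Fin K) :
    0 ≤ mixCoeff p p' θ s k := by
  simp only [mixCoeff]; split_ifs <;> linarith

lemma sum_mixCoeff [Fintype ι] (s : ι) : ∑ k, mixCoeff p p' θ s k = 1 := by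
  simp [mixCoeff, sum_add_distrib]

lemma sum_mixCoeff_mul (f : Fin K → ℝ) (s : ι) :
    ∑ k, mixCoeff p p' θ s k * f k = (1 - θ) * f (p s) + θ * f (p' s) := by
  simp [mixCoeff, add_mul, sum_add_distrib]

lemma eq_or_eq_of_mixCoeff_pos {s : ι} {k : Fin K} (h : 0 < mixCoeff p p' θ s k) :
    p s = k ∨ p' s = k := by
  by_contra hne
  rw [not_or] at hne
  simp [mixCoeff, hne.1, hne.2] at h

lemma mixCoeff_pos_iff {s : ι} (hs : p s = p' s) {k : Fin K} :
    0 < mixCoeff p p' θ s k ↔ p s = k := by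
  simp only [mixCoeff, ← hs]
  split_ifs with h <;> simp [h]

lemma eq_of_forall_mixCoeff_pos_iff {r : ι} (hpp' : ∀ s ≠ r, p s = p' s)
    (hwit : ∃ s ≠ r, p s = p r ∨ p s = p' r) {k k' : Fin K} (hk : ∃ s, 0 < mixCoeff p p' θ s k)
    (hk' : ∃ s, 0 < mixCoeff p p' θ s k')
    (hiff : ∀ s, 0 < mixCoeff p p' θ s k ↔ 0 < mixCoeff p p' θ s k') :
    k = k' := by
  by_contra hne
  have hoff : ∀ s ≠ r, p s ≠ k ∧ p s ≠ k' := fun s hs =>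
    have hpos := fun k => mixCoeff_pos_iff (θ := θ) (k := k) (hpp' s hs)
    ⟨fun h => hne (h.symm.trans ((hpos k').1 ((hiff s).1 ((hpos k).2 h)))),
      fun h => hne (((hpos k).1 ((hiff s).2 ((hpos k').2 h))).symm.trans h)⟩
  have hr : ∀ k, (∃ s, 0 < mixCoeff p p' θ s k) → (∀ s ≠ r, p s ≠ k) → p r = k ∨ p' r = k := by
    rintro k ⟨s, hs⟩ hoffk
    by_cases hsr : s = r
    · exact hsr ▸ eq_or_eq_of_mixCoeff_pos hs
    · exact absurd ((mixCoeff_pos_iff (hpp' s hsr)).1 hs) (hoffk s hsr)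
  obtain ⟨s, hs, hw⟩ := hwit
  have := hr k hk fun s hs => (hoff s hs).1
  have := hr k' hk' fun s hs => (hoff s hs).2
  have := hoff s hs
  grind

end Mixing

section Paths

variable {K : ℕ} {ι : Type*} [Fintype ι] {t : ι → ℝ} {z : ι → Fin K → ℝ}
  {v xstar : Fin K → ℝ} {istar : Fin K} {S : ι → Finset (Fin K)}

def achievableCS (v xstar : Fin K → ℝ) (π : ℝ) : Set ℝ :=
  {u | ∃ (A : Finset (Fin K)) (xs : Fin K → Fin K → ℝ) (w : Fin K → ℝ),
    IsDirectSeg v xstar A xs w ∧ directCS v A xs w = u ∧ directPS v A xs w = π}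

def configCS (v : Fin K → ℝ) (t : ι → ℝ) (z : ι → Fin K → ℝ) (p : ι → Fin K) : ℝ :=
  ∑ s, t s * surplusAt v (p s) (z s)

lemma IsPriceDecomposition.uIcc_configCS_subset (hD : IsPriceDecomposition v xstar istar t z S)
    {p p' : ι → Fin K} (hp : ∀ s, p s ∈ S s) (hp' : ∀ s, p' s ∈ S s) {r : ι}
    (hpp' : ∀ s ≠ r, p s = p' s) (hwit : ∃ s ≠ r, p s = p r ∨ p s = p' r) :
    Set.uIcc (configCS v t z p) (configCS v t z p') ⊆ achievableCS v xstar (rev v xstar istar) := by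
  intro u hu
  rw [← segment_eq_uIcc, segment_eq_image] at hu
  obtain ⟨θ, ⟨hθ0, hθ1⟩, rfl⟩ := hu
  have hc := mixCoeff_nonneg (p := p) (p' := p') hθ0 hθ1
  have hcS : ∀ s k, 0 < mixCoeff p p' θ s k → k ∈ S s := fun s k h => by
    rcases eq_or_eq_of_mixCoeff_pos h with rfl | rfl
    exacts [hp s, hp' s]
  have hsep : ∀ k ∈ pooledPrices t (mixCoeff p p' θ), ∀ k' ∈ pooledPrices t (mixCoeff p p' θ),
      (∀ s, 0 < mixCoeff p p' θ s k ↔ 0 < mixCoeff p p' θ s k') → k = k' :=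
    fun k hk k' hk' => eq_of_forall_mixCoeff_pos_iff hpp' hwit
      (exists_pos_of_mem_pooledPrices hc hk) (exists_pos_of_mem_pooledPrices hc hk')
  refine ⟨_, _, _, hD.isDirectSeg_pooled hc sum_mixCoeff hcS hsep, ?_,
    hD.directPS_pooled hc sum_mixCoeff hcS⟩
  rw [directCS_eq, sum_pooledWeight_mul (fun s => (hD.pos s).le) hc]
  simp only [sum_mixCoeff_mul, configCS, smul_eq_mul, mul_sum, ← sum_add_distrib]
  exact sum_congr rfl fun s _ => by ring

end Paths

section Bridge

variable {K : ℕ} {ι : Type*} [DecidableEq ι] {S : ι → Finset (Fin K)} {b : ι} {p q : ι → Fin K}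

def bridgeConfig (b : ι) (p q : ι → Fin K) (D : Finset ι) (x : Fin K) (s : ι) : Fin K :=
  if s = b then x else if s ∈ D then q s else p s

lemma bridgeConfig_mem (hb : S b = univ) (hp : ∀ s, p s ∈ S s) (hq : ∀ s, q s ∈ S s)
    (D : Finset ι) (x : Fin K) (s : ι) : bridgeConfig b p q D x s ∈ S s := by
  simp only [bridgeConfig]
  split_ifs with h
  exacts [h ▸ hb ▸ mem_univ x, hq s, hp s]

variable [Fintype ι] {t : ι → ℝ} {z : ι → Fin K → ℝ} {v xstar : Fin K → ℝ} {istar : Fin K}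

lemma uIcc_subset_of_uIcc_subset {U : Set ℝ} {a a' a'' : ℝ} (h : Set.uIcc a a' ⊆ U)
    (h' : Set.uIcc a' a'' ⊆ U) : Set.uIcc a a'' ⊆ U :=
  Set.uIcc_subset_uIcc_union_uIcc.trans (Set.union_subset h h')

/-- Segment `b` first moves to the old price of the segment `r` about to change, so that `r` can
move; then `b` follows to any price charged elsewhere. -/
lemma IsPriceDecomposition.uIcc_configCS_bridgeConfig_subset
    (hD : IsPriceDecomposition v xstar istar t z S) (hb : S b = univ) (hp : ∀ s, p s ∈ S s)
    (hq : ∀ s, q s ∈ S s) (D : Finset ι) (x : Fin K) (hx : ∃ s ≠ b, bridgeConfig b p q D x s = x) :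
    Set.uIcc (configCS v t z p) (configCS v t z (bridgeConfig b p q D x)) ⊆
      achievableCS v xstar (rev v xstar istar) := by
  have hmem := bridgeConfig_mem hb hp hq
  induction D using Finset.induction_on generalizing x with
  | empty =>
    obtain ⟨s, hsb, hsx⟩ := hx
    have hp_eq : p = bridgeConfig b p q ∅ (p b) := funext fun s => by
      by_cases h : s = b <;> simp [bridgeConfig, h]
    rw [show configCS v t z p = configCS v t z (bridgeConfig b p q ∅ (p b)) from congrArg _ hp_eq]
    exact hD.uIcc_configCS_subset (hmem _ _) (hmem _ _) (fun s hs => by simp [bridgeConfig, hs])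
      ⟨s, hsb, Or.inr (by simpa [bridgeConfig, hsb] using hsx)⟩
  | insert r D hr ih =>
    obtain ⟨s, hsb, hsx⟩ := hx
    by_cases hrb : r = b
    · have h : bridgeConfig b p q (insert r D) x = bridgeConfig b p q D x := funext fun s => by
        by_cases h : s = b <;> simp [bridgeConfig, h, hrb]
      exact h ▸ ih x ⟨s, hsb, h ▸ hsx⟩
    refine uIcc_subset_of_uIcc_subset (a' := configCS v t z (bridgeConfig b p q (insert r D) (p r)))
      (uIcc_subset_of_uIcc_subset (ih (p r) ⟨r, hrb, by simp [bridgeConfig, hrb, hr]⟩) ?_) ?_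
    · exact hD.uIcc_configCS_subset (hmem _ _) (hmem _ _) (r := r)
        (fun s hs => by simp [bridgeConfig, hs])
        ⟨b, Ne.symm hrb, Or.inl (by simp [bridgeConfig, hrb, hr])⟩
    · exact hD.uIcc_configCS_subset (hmem _ _) (hmem _ _) (fun s hs => by simp [bridgeConfig, hs])
        ⟨s, hsb, Or.inr (by simpa [bridgeConfig, hsb] using hsx)⟩

theorem IsPriceDecomposition.uIcc_configCS_subset_of_eq_univ
    (hD : IsPriceDecomposition v xstar istar t z S) (hb : S b = univ) (hs : ∃ s, s ≠ b)
    (hp : ∀ s, p s ∈ S s) (hq : ∀ s, q s ∈ S s) :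
    Set.uIcc (configCS v t z p) (configCS v t z q) ⊆ achievableCS v xstar (rev v xstar istar) := by
  obtain ⟨s, hsb⟩ := hs
  have hq_eq : q = bridgeConfig b p q univ (q b) := funext fun s => by
    by_cases h : s = b <;> simp [bridgeConfig, h]
  refine uIcc_subset_of_uIcc_subset (hD.uIcc_configCS_bridgeConfig_subset hb hp hq univ (q s)
    ⟨s, hsb, by simp [bridgeConfig, hsb]⟩) ?_
  rw [show configCS v t z q = configCS v t z (bridgeConfig b p q univ (q b)) from congrArg _ hq_eq]
  exact hD.uIcc_configCS_subset (bridgeConfig_mem hb hp hq _ _) (bridgeConfig_mem hb hp hq _ _)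
    (fun s hs => by simp [bridgeConfig, hs]) ⟨s, hsb, Or.inl (by simp [bridgeConfig, hsb])⟩

end Bridge

section Endpoints

variable {K : ℕ} {ι : Type*} [Fintype ι] {t : ι → ℝ} {z : ι → Fin K → ℝ}
  {v xstar : Fin K → ℝ} {istar : Fin K} {S : ι → Finset (Fin K)}
  (hD : IsPriceDecomposition v xstar istar t z S)
include hD

lemma IsPriceDecomposition.isCharMarket_univ {b : ι} (hb : S b = univ) (hsub : ∀ s, s = b) :
    IsCharMarket v univ xstar := by
  have hsum := hD.sum_eq_one
  rw [sum_eq_single_of_mem b (mem_univ b) fun s _ hs => absurd (hsub s) hs] at hsum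
  have hx : xstar = z b := by
    rw [← hD.sum_smul, sum_eq_single_of_mem b (mem_univ b) fun s _ hs => absurd (hsub s) hs,
      hsum, one_smul]
  have hall : ∀ k, k ∈ S b := fun k => hb ▸ mem_univ k
  subst hx
  exact ⟨hD.isMarket b, fun j hj => absurd (mem_univ j) hj, fun i _ i' _ => by
    rw [hD.rev_eq (hall i), hD.rev_eq (hall i')]⟩

variable (hz : ∀ s, ∀ j ∉ S s, z s j = 0)
include hz

lemma IsPriceDecomposition.configCS_max'_eq_zero :
    configCS v t z (fun s => (S s).max' ⟨istar, hD.mem s⟩) = 0 :=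
  sum_eq_zero fun s _ => by
    rw [surplusAt_eq_zero v _ fun j hj => hz s j fun hjS => (S s).le_max' j hjS |>.not_gt hj,
      mul_zero]

lemma IsPriceDecomposition.configCS_min'_eq :
    configCS v t z (fun s => (S s).min' ⟨istar, hD.mem s⟩) = v ⬝ᵥ xstar - rev v xstar istar := by
  have hs : ∀ s, surplusAt v ((S s).min' ⟨istar, hD.mem s⟩) (z s) = v ⬝ᵥ z s - rev v (z s) istar :=
    fun s => by
      rw [← hD.rev_eq ((S s).min'_mem ⟨istar, hD.mem s⟩), ← revenueAt_apply, eq_sub_iff_add_eq,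
        surplusAt_add_revenueAt_eq v _ fun j hj =>
          hz s j fun hjS => ((S s).min'_le j hjS).not_gt hj]
  simp only [configCS, hs, mul_sub, sum_sub_distrib, ← hD.sum_smul, dotProduct_sum,
    dotProduct_smul, smul_eq_mul, ← revenueAt_apply, map_sum, map_smul]

end Endpoints

lemma OptPrice.exists_isPriceDecomposition {K : ℕ} {v xstar : Fin K → ℝ} {istar : Fin K}
    (hv0 : ∀ k, 0 < v k) (hv : StrictMono v) (hx : IsMarket K xstar) (hxpos : ∀ j, 0 < xstar j)
    (hopt : OptPrice v xstar istar) :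
    ∃ (n : ℕ) (t : Fin n → ℝ) (S : Fin n → Finset (Fin K)),
      IsPriceDecomposition v xstar istar t (charMarket v ∘ S) S ∧ ∃ b, S b = univ := by
  obtain ⟨n, t, S, ht, hi, -, hb, hlin, hsum⟩ := hopt.exists_charMarket_decomposition hv0 hv hx.1
  have hsupp : supportFinset xstar = univ :=
    eq_univ_of_forall fun j => mem_supportFinset_iff.2 (hxpos j).ne'
  have hne : ∀ s, (S s).Nonempty := fun s => ⟨istar, hi s⟩
  have htsum : ∑ s, t s = 1 := by
    have := congrArg (fun y => ∑ j, y j) hsum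
    simp only [Finset.sum_apply, Pi.smul_apply, smul_eq_mul] at this
    rw [sum_comm] at this
    simpa [← mul_sum, (isMarket_charMarket hv0 hv (hne _)).2, hx.2] using this
  refine ⟨n, t, S, ⟨fun s => isMarket_charMarket hv0 hv (hne s), ht, htsum, hsum, hlin,
    fun s k hk => optPrice_charMarket hv0 hv (hne s) hk, hi⟩, ?_⟩
  rw [← hsupp]
  refine hb fun h => ?_
  simpa [h] using hx.2

theorem stmt10_general {K : ℕ} (v : Fin K → ℝ)
    (hv0 : ∀ k, 0 < v k) (hv : StrictMono v)
    (xstar : Fin K → ℝ) (hxstar : IsMarket K xstar) (hxpos : ∀ k, 0 < xstar k)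
    (wstar πstar : ℝ) (hw : wstar = ∑ j, v j * xstar j)
    (hπ : IsGreatest (Set.range (rev v xstar)) πstar)
    (xV : Fin K → ℝ) (hxV : IsCharMarket v Finset.univ xV) (hne : xstar ≠ xV)
    (u : ℝ) :
    (∃ (A : Finset (Fin K)) (xs : Fin K → Fin K → ℝ) (w : Fin K → ℝ),
        IsDirectSeg v xstar A xs w ∧ directCS v A xs w = u ∧ directPS v A xs w = πstar) ↔
      (0 ≤ u ∧ u ≤ wstar - πstar) := by
  change u ∈ achievableCS v xstar πstar ↔ _
  rw [show ∑ j, v j * xstar j = v ⬝ᵥ xstar from rfl] at hw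
  constructor
  · rintro ⟨A, xs, w, hseg, rfl, rfl⟩
    exact ⟨hseg.directCS_nonneg hv.monotone,
      by linarith [hseg.directCS_add_directPS_le fun j => (hv0 j).le]⟩
  · intro hu
    obtain ⟨istar, rfl⟩ := hπ.1
    have hopt : OptPrice v xstar istar := fun i => hπ.2 ⟨i, rfl⟩
    obtain ⟨n, t, S, hD, b, hb⟩ := hopt.exists_isPriceDecomposition hv0 hv hxstar hxpos
    have hs : ∃ s, s ≠ b := by
      by_contra! h
      exact hne (IsCharMarket.eq_of_univ hv0 (hD.isCharMarket_univ hb h) hxV)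
    have hz : ∀ s, ∀ j ∉ S s, (charMarket v ∘ S) s j = 0 := fun s j hj => charMarket_eq_zero hj
    have := hD.uIcc_configCS_subset_of_eq_univ hb hs
      (p := fun s => (S s).max' ⟨istar, hD.mem s⟩) (q := fun s => (S s).min' ⟨istar, hD.mem s⟩)
      (fun s => max'_mem _ _) (fun s => min'_mem _ _)
    rw [hD.configCS_max'_eq_zero hz, hD.configCS_min'_eq hz, ← hw] at this
    exact this (Set.Icc_subset_uIcc hu)

theorem stmt10 {K : ℕ} (hK : 2 ≤ K) (v : Fin K → ℝ)
    (hv0 : ∀ k, 0 < v k) (hv : StrictMono v)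
    (xstar : Fin K → ℝ) (hxstar : IsMarket K xstar) (hxpos : ∀ k, 0 < xstar k)
    (wstar πstar : ℝ) (hw : wstar = ∑ j, v j * xstar j)
    (hπ : IsGreatest (Set.range (rev v xstar)) πstar)
    (xV : Fin K → ℝ) (hxV : IsCharMarket v Finset.univ xV) (hne : xstar ≠ xV)
    (u : ℝ) :
    (∃ (A : Finset (Fin K)) (xs : Fin K → Fin K → ℝ) (w : Fin K → ℝ),
        IsDirectSeg v xstar A xs w ∧ directCS v A xs w = u ∧ directPS v A xs w = πstar) ↔
      (0 ≤ u ∧ u ≤ wstar - πstar) :=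
  stmt10_general v hv0 hv xstar hxstar hxpos wstar πstar hw hπ xV hxV hne u
end

section
/- Let K = 2, v_1 = 1, v_2 = 2, and x* = (1/2, 1/2). Let σ be the segmentation with σ(x*) = 1, and let φ be the pricing rule with φ_1(x*) = φ_2(x*) = 1/2 (this φ is optimal for σ). Then there is no direct segmentation that, with its direct pricing rule, induces the same joint distribution over valuations and prices as (σ, φ). -/
open Finset

/-!
A direct segmentation can be read off its joint distribution: the column of price `v k` is
`w k • xs k`, so its total mass is `w k` and its normalisation is the market `xs k`. Since the
markets of a direct segmentation are pairwise distinct, distinct charged prices have distinct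
columns. Mixing both prices uniformly on the single market `x*` gives two equal nonzero columns.
-/

section DirectSegmentation

variable {K : ℕ} {v xstar : Fin K → ℝ} {A : Finset (Fin K)} {xs : Fin K → Fin K → ℝ}
  {w : Fin K → ℝ}

lemma mem_of_directJoint_ne_zero {j k : Fin K} (h : directJoint A xs w j k ≠ 0) : k ∈ A := by
  by_contra hk
  exact h (if_neg hk)

lemma IsDirectSeg.sum_directJoint (hseg : IsDirectSeg v xstar A xs w) {k : Fin K} (hk : k ∈ A) :
    ∑ j, directJoint A xs w j k = w k := by
  simp only [directJoint, if_pos hk, ← mul_sum, (hseg.2.1 k hk).2, mul_one]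

lemma IsDirectSeg.eq_of_directJoint_col_eq (hseg : IsDirectSeg v xstar A xs w) {k k' : Fin K}
    (hk : k ∈ A) (hk' : k' ∈ A) (hcol : ∀ j, directJoint A xs w j k = directJoint A xs w j k') :
    k = k' := by
  have hw : w k = w k' := by
    rw [← hseg.sum_directJoint hk, ← hseg.sum_directJoint hk']
    exact sum_congr rfl fun j _ => hcol j
  refine hseg.1 hk hk' (funext fun j => ?_)
  have hj := hcol j
  rw [directJoint, directJoint, if_pos hk, if_pos hk', hw] at hj
  exact mul_left_cancel₀ (hseg.2.2.2.1 k' hk').ne' hj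

end DirectSegmentation

lemma jointDist_single_one {K : ℕ} (x : Fin K → ℝ) (φ : (Fin K → ℝ) → Fin K → ℝ) (j k : Fin K) :
    jointDist (Finsupp.single x 1) φ j k = φ x k * x j := by
  simp [jointDist]

theorem stmt11 :
    ¬ ∃ (A : Finset (Fin 2)) (xs : Fin 2 → Fin 2 → ℝ) (w : Fin 2 → ℝ),
        IsDirectSeg (![1, 2]) (![1/2, 1/2]) A xs w ∧
        ∀ j k, directJoint A xs w j k =
          jointDist (Finsupp.single (![1/2, 1/2] : Fin 2 → ℝ) (1 : ℝ))
            (fun _ => ![1/2, 1/2]) j k := by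
  rintro ⟨A, xs, w, hseg, hjoint⟩
  have hquarter : ∀ j k, directJoint A xs w j k = 1 / 4 := by
    intro j k
    rw [hjoint, jointDist_single_one]
    fin_cases j <;> fin_cases k <;> norm_num
  have hmem : ∀ k, k ∈ A := fun k =>
    mem_of_directJoint_ne_zero (j := 0) (by rw [hquarter]; norm_num)
  exact absurd (hseg.eq_of_directJoint_col_eq (hmem 0) (hmem 1) (by simp [hquarter])) (by decide)
end

section
/- Let σ be a segmentation and φ an optimal pricing rule for σ. For each k ∈ {1,…,K} with m_k := ∑_{x ∈ supp σ} σ(x) φ_k(x) > 0, define x^k := (1/m_k) ∑_{x ∈ supp σ} σ(x) φ_k(x) · x. If the markets x^k (over all k with m_k > 0) are pairwise distinct, then the distribution σ' assigning mass m_k to x^k is a direct segmentation (in particular x^k ∈ X_k for each such k) which, with its direct pricing rule, induces the same joint distribution over valuations and prices as (σ, φ). -/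
open Finset

section CondMarket

variable {K : ℕ} {σ : (Fin K → ℝ) →₀ ℝ} {φ : (Fin K → ℝ) → Fin K → ℝ}

lemma weight_nonneg (hσ0 : ∀ x, 0 ≤ σ x) (hφ : IsPricingRule σ φ) {x : Fin K → ℝ}
    (hx : x ∈ σ.support) (k : Fin K) : 0 ≤ σ x * φ x k :=
  mul_nonneg (hσ0 x) ((hφ x hx).1 k)

lemma mass_nonneg (hσ0 : ∀ x, 0 ≤ σ x) (hφ : IsPricingRule σ φ) (k : Fin K) :
    0 ≤ mass σ φ k :=
  sum_nonneg fun _ hx => weight_nonneg hσ0 hφ hx k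

lemma weight_eq_zero_of_mass_eq_zero (hσ0 : ∀ x, 0 ≤ σ x) (hφ : IsPricingRule σ φ)
    {k : Fin K} (hk : mass σ φ k = 0) {x : Fin K → ℝ} (hx : x ∈ σ.support) :
    σ x * φ x k = 0 :=
  (sum_eq_zero_iff_of_nonneg fun _ hy => weight_nonneg hσ0 hφ hy k).mp hk x hx

lemma condMarket_apply (k j : Fin K) :
    condMarket σ φ k j = (mass σ φ k)⁻¹ * ∑ x ∈ σ.support, σ x * φ x k * x j := by
  simp [condMarket, Finset.sum_apply]

lemma mass_smul_condMarket (hσ0 : ∀ x, 0 ≤ σ x) (hφ : IsPricingRule σ φ) (k : Fin K) :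
    mass σ φ k • condMarket σ φ k = ∑ x ∈ σ.support, (σ x * φ x k) • x := by
  rcases (mass_nonneg hσ0 hφ k).eq_or_lt with hk | hk
  · rw [← hk, zero_smul, eq_comm]
    exact sum_eq_zero fun x hx => by
      rw [weight_eq_zero_of_mass_eq_zero hσ0 hφ hk.symm hx, zero_smul]
  · rw [condMarket, smul_smul, mul_inv_cancel₀ hk.ne', one_smul]

lemma sum_mass (hφ : IsPricingRule σ φ) : ∑ k, mass σ φ k = ∑ x ∈ σ.support, σ x := by
  unfold mass
  rw [sum_comm]
  exact sum_congr rfl fun x hx => by rw [← mul_sum, (hφ x hx).2, mul_one]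

lemma sum_mass_smul_condMarket (hσ0 : ∀ x, 0 ≤ σ x) (hφ : IsPricingRule σ φ) :
    ∑ k, mass σ φ k • condMarket σ φ k = ∑ x ∈ σ.support, σ x • x := by
  simp_rw [mass_smul_condMarket hσ0 hφ]
  rw [sum_comm]
  exact sum_congr rfl fun x hx => by rw [← sum_smul, ← mul_sum, (hφ x hx).2, mul_one]

lemma sum_filter_mass_pos (hσ0 : ∀ x, 0 ≤ σ x) (hφ : IsPricingRule σ φ) {M : Type*}
    [AddCommMonoid M] {f : Fin K → M} (hf : ∀ k, mass σ φ k = 0 → f k = 0) :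
    ∑ k ∈ univ.filter (fun k => 0 < mass σ φ k), f k = ∑ k, f k :=
  sum_filter_of_ne fun k _ hfk =>
    (mass_nonneg hσ0 hφ k).lt_of_ne' fun hk => hfk (hf k hk)

lemma isMarket_condMarket (hσ0 : ∀ x, 0 ≤ σ x) (hσm : ∀ x ∈ σ.support, IsMarket K x)
    (hφ : IsPricingRule σ φ) {k : Fin K} (hk : 0 < mass σ φ k) :
    IsMarket K (condMarket σ φ k) := by
  refine ⟨fun j => ?_, ?_⟩
  · rw [condMarket_apply]
    exact mul_nonneg (inv_nonneg.mpr hk.le)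
      (sum_nonneg fun x hx => mul_nonneg (weight_nonneg hσ0 hφ hx k) ((hσm x hx).1 j))
  · simp_rw [condMarket_apply, ← mul_sum]
    rw [sum_comm]
    have hrow : ∀ x ∈ σ.support, ∑ j, σ x * φ x k * x j = σ x * φ x k := fun x hx => by
      rw [← mul_sum, (hσm x hx).2, mul_one]
    rw [sum_congr rfl hrow]
    exact inv_mul_cancel₀ hk.ne'

lemma rev_condMarket (v : Fin K → ℝ) (k i : Fin K) :
    rev v (condMarket σ φ k) i
      = (mass σ φ k)⁻¹ * ∑ x ∈ σ.support, σ x * φ x k * rev v x i := by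
  simp only [rev, condMarket_apply, mul_sum]
  rw [sum_comm]
  ring_nf

lemma optPrice_condMarket {v : Fin K → ℝ} (hσ0 : ∀ x, 0 ≤ σ x) (hφ : IsPricingRule σ φ)
    (hopt : IsOptimalPricing v σ φ) (k : Fin K) : OptPrice v (condMarket σ φ k) k := by
  intro i
  rw [rev_condMarket, rev_condMarket]
  refine mul_le_mul_of_nonneg_left (sum_le_sum fun x hx => ?_)
    (inv_nonneg.mpr (mass_nonneg hσ0 hφ k))
  rcases ((hφ x hx).1 k).eq_or_lt with hφk | hφk
  · simp [← hφk]
  · exact mul_le_mul_of_nonneg_left (hopt x hx k hφk i) (weight_nonneg hσ0 hφ hx k)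

lemma directJoint_condMarket (hσ0 : ∀ x, 0 ≤ σ x) (hφ : IsPricingRule σ φ) (j k : Fin K) :
    directJoint (univ.filter fun k => 0 < mass σ φ k) (condMarket σ φ) (mass σ φ) j k
      = jointDist σ φ j k := by
  have h := congrFun (mass_smul_condMarket hσ0 hφ k) j
  simp only [Pi.smul_apply, smul_eq_mul, Finset.sum_apply] at h
  rw [directJoint, jointDist, ← h]
  split_ifs with hk
  · rfl
  · simp [(mass_nonneg hσ0 hφ k).eq_of_not_lt' (by simpa using hk)]

end CondMarket

theorem stmt13_general {K : ℕ} (v : Fin K → ℝ)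
    (xstar : Fin K → ℝ)
    (σ : (Fin K → ℝ) →₀ ℝ) (φ : (Fin K → ℝ) → Fin K → ℝ)
    (hσ : IsSegmentation xstar σ) (hφ : IsPricingRule σ φ)
    (hopt : IsOptimalPricing v σ φ)
    (hdist : Set.InjOn (condMarket σ φ) {k : Fin K | 0 < mass σ φ k}) :
    IsDirectSeg v xstar (Finset.univ.filter fun k => 0 < mass σ φ k)
        (condMarket σ φ) (mass σ φ) ∧
      ∀ j k, directJoint (Finset.univ.filter fun k => 0 < mass σ φ k)
          (condMarket σ φ) (mass σ φ) j k = jointDist σ φ j k := by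
  obtain ⟨hσ0, hσ1, hσm, hσavg⟩ := hσ
  have hpos : ∀ {k}, k ∈ univ.filter (fun k => 0 < mass σ φ k) → 0 < mass σ φ k :=
    fun hk => (mem_filter.mp hk).2
  refine ⟨⟨?_, fun k hk => isMarket_condMarket hσ0 hσm hφ (hpos hk),
    fun k _ => optPrice_condMarket hσ0 hφ hopt k, fun k hk => hpos hk, ?_, ?_⟩,
    directJoint_condMarket hσ0 hφ⟩
  · exact hdist.mono fun k hk => hpos hk
  · rw [sum_filter_mass_pos hσ0 hφ fun _ hk => hk, sum_mass hφ, hσ1]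
  · rw [sum_filter_mass_pos hσ0 hφ fun k hk => by rw [hk, zero_smul],
      sum_mass_smul_condMarket hσ0 hφ, hσavg]

theorem stmt13 {K : ℕ} (hK : 2 ≤ K) (v : Fin K → ℝ)
    (hv0 : ∀ k, 0 < v k) (hv : StrictMono v)
    (xstar : Fin K → ℝ) (hxstar : IsMarket K xstar) (hxpos : ∀ k, 0 < xstar k)
    (σ : (Fin K → ℝ) →₀ ℝ) (φ : (Fin K → ℝ) → Fin K → ℝ)
    (hσ : IsSegmentation xstar σ) (hφ : IsPricingRule σ φ)
    (hopt : IsOptimalPricing v σ φ)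
    (hdist : Set.InjOn (condMarket σ φ) {k : Fin K | 0 < mass σ φ k}) :
    IsDirectSeg v xstar (Finset.univ.filter fun k => 0 < mass σ φ k)
        (condMarket σ φ) (mass σ φ) ∧
      ∀ j k, directJoint (Finset.univ.filter fun k => 0 < mass σ φ k)
          (condMarket σ φ) (mass σ φ) j k = jointDist σ φ j k :=
  stmt13_general v xstar σ φ hσ hφ hopt hdist
end

section
/- For every optimal revised segmentation σ there exists a revised direct segmentation σ' that induces the same joint distribution over valuations and prices as σ; explicitly, σ' assigns to each k with total mass m_k := ∑_{(x,ℓ) ∈ supp σ, ℓ = k} σ(x,ℓ) > 0 the pair (x^k, k) with mass m_k, where x^k := (1/m_k) ∑_{(x,ℓ) ∈ supp σ, ℓ = k} σ(x,ℓ) · x. -/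
open Finset

/-- A revised segmentation: a finitely supported probability distribution on pairs
`(x, k)` of a market and a price index, averaging to `xstar`. -/
def IsRevisedSeg {K : ℕ} (xstar : Fin K → ℝ) (σ : ((Fin K → ℝ) × Fin K) →₀ ℝ) : Prop :=
  (∀ p, 0 ≤ σ p) ∧ (∑ p ∈ σ.support, σ p = 1) ∧
  (∀ p ∈ σ.support, IsMarket K p.1) ∧
  (∑ p ∈ σ.support, σ p • p.1 = xstar)

/-- A revised segmentation is optimal if in each segment `(x, k)` the charged price
`v k` is optimal for `x`. -/
def IsOptimalRevised {K : ℕ} (v : Fin K → ℝ) (σ : ((Fin K → ℝ) × Fin K) →₀ ℝ) : Prop :=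
  ∀ p ∈ σ.support, OptPrice v p.1 p.2

/-- The joint distribution over valuations and prices induced by a revised
segmentation: mass of the pair `(v j, v k)`. -/
noncomputable def revisedJoint {K : ℕ} (σ : ((Fin K → ℝ) × Fin K) →₀ ℝ)
    (j k : Fin K) : ℝ :=
  ∑ p ∈ σ.support.filter (fun p => p.2 = k), σ p * p.1 j

/-- Total mass `m_k` assigned to price `v k` by a revised segmentation. -/
noncomputable def revMass {K : ℕ} (σ : ((Fin K → ℝ) × Fin K) →₀ ℝ) (k : Fin K) : ℝ :=
  ∑ p ∈ σ.support.filter (fun p => p.2 = k), σ p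

/-- The conditional market `x^k` given price `v k` under a revised segmentation. -/
noncomputable def revCondMarket {K : ℕ} (σ : ((Fin K → ℝ) × Fin K) →₀ ℝ)
    (k : Fin K) : Fin K → ℝ :=
  (revMass σ k)⁻¹ • ∑ p ∈ σ.support.filter (fun p => p.2 = k), σ p • p.1

/-!
Merge all segments that charge the same price `v k` into one segment, their weighted
average `x^k` with weight `m_k`. Revenue is linear in the market, so the inequalities saying
that `v k` is optimal survive averaging (each `X_k` is a convex cone), and the weights, the
barycentre and the joint distribution are sums over segments that are merely regrouped by
price.
-/

section Convexity

variable {K : ℕ} {ι : Type*} {s : Finset ι} {w : ι → ℝ} {x : ι → Fin K → ℝ}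

theorem IsMarket.sum_smul (hw : ∀ i ∈ s, 0 ≤ w i) (hw1 : ∑ i ∈ s, w i = 1)
    (hx : ∀ i ∈ s, IsMarket K (x i)) : IsMarket K (∑ i ∈ s, w i • x i) := by
  simp only [IsMarket, Finset.sum_apply, Pi.smul_apply, smul_eq_mul]
  refine ⟨fun j => sum_nonneg fun i hi => mul_nonneg (hw i hi) ((hx i hi).1 j), ?_⟩
  rw [sum_comm, ← hw1]
  exact sum_congr rfl fun i hi => by rw [← mul_sum, (hx i hi).2, mul_one]

theorem rev_sum_smul (v : Fin K → ℝ) (k : Fin K) :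
    rev v (∑ i ∈ s, w i • x i) k = ∑ i ∈ s, w i * rev v (x i) k := by
  simp only [rev, Finset.sum_apply, Pi.smul_apply, smul_eq_mul, mul_sum]
  rw [sum_comm]
  exact sum_congr rfl fun i _ => sum_congr rfl fun j _ => by ring

theorem OptPrice.sum_smul {v : Fin K → ℝ} {k : Fin K} (hw : ∀ i ∈ s, 0 ≤ w i)
    (hx : ∀ i ∈ s, OptPrice v (x i) k) : OptPrice v (∑ i ∈ s, w i • x i) k := fun i => by
  rw [rev_sum_smul, rev_sum_smul]
  exact sum_le_sum fun p hp => mul_le_mul_of_nonneg_left (hx p hp i) (hw p hp)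

end Convexity

section RevisedSeg

variable {K : ℕ} {σ : ((Fin K → ℝ) × Fin K) →₀ ℝ}

theorem revMass_nonneg (hσ : ∀ p, 0 ≤ σ p) (k : Fin K) : 0 ≤ revMass σ k :=
  sum_nonneg fun p _ => hσ p

theorem revCondMarket_eq_sum (σ : ((Fin K → ℝ) × Fin K) →₀ ℝ) (k : Fin K) :
    revCondMarket σ k =
      ∑ p ∈ σ.support.filter (fun p => p.2 = k), ((revMass σ k)⁻¹ * σ p) • p.1 := by
  simp only [revCondMarket, smul_sum, smul_smul]

theorem isMarket_revCondMarket (hσ : ∀ p, 0 ≤ σ p)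
    (hmkt : ∀ p ∈ σ.support, IsMarket K p.1) {k : Fin K} (hk : 0 < revMass σ k) :
    IsMarket K (revCondMarket σ k) := by
  rw [revCondMarket_eq_sum]
  refine IsMarket.sum_smul (fun p _ => mul_nonneg (inv_nonneg.2 hk.le) (hσ p)) ?_
    fun p hp => hmkt p (mem_filter.1 hp).1
  rw [← mul_sum]
  exact inv_mul_cancel₀ hk.ne'

theorem optPrice_revCondMarket {v : Fin K → ℝ} (hσ : ∀ p, 0 ≤ σ p)
    (hopt : IsOptimalRevised v σ) (k : Fin K) : OptPrice v (revCondMarket σ k) k := by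
  rw [revCondMarket_eq_sum]
  refine OptPrice.sum_smul (fun p _ => mul_nonneg (inv_nonneg.2 (revMass_nonneg hσ k)) (hσ p))
    fun p hp => ?_
  obtain ⟨hmem, rfl⟩ := mem_filter.1 hp
  exact hopt p hmem

theorem revMass_smul_revCondMarket (hσ : ∀ p, 0 ≤ σ p) (k : Fin K) :
    revMass σ k • revCondMarket σ k =
      ∑ p ∈ σ.support.filter (fun p => p.2 = k), σ p • p.1 := by
  rcases (revMass_nonneg hσ k).eq_or_lt with h | h
  · have hzero := (sum_eq_zero_iff_of_nonneg fun p _ => hσ p).1 h.symm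
    rw [← h, zero_smul, sum_eq_zero fun p hp => by rw [hzero p hp, zero_smul]]
  · exact smul_inv_smul₀ h.ne' _

theorem revisedJoint_eq_revMass_mul (hσ : ∀ p, 0 ≤ σ p) (j k : Fin K) :
    revisedJoint σ j k = revMass σ k * revCondMarket σ k j := by
  have := congrFun (revMass_smul_revCondMarket hσ k) j
  simp only [Pi.smul_apply, smul_eq_mul, Finset.sum_apply] at this
  rw [revisedJoint, this]

theorem sum_revMass (σ : ((Fin K → ℝ) × Fin K) →₀ ℝ) :
    ∑ k, revMass σ k = ∑ p ∈ σ.support, σ p :=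
  sum_fiberwise _ _ _

theorem sum_revMass_smul_revCondMarket (hσ : ∀ p, 0 ≤ σ p) :
    ∑ k, revMass σ k • revCondMarket σ k = ∑ p ∈ σ.support, σ p • p.1 := by
  simp only [revMass_smul_revCondMarket hσ]
  exact sum_fiberwise _ _ _

end RevisedSeg

section RevDirectSeg

variable {K : ℕ} {v xstar : Fin K → ℝ} {σ : ((Fin K → ℝ) × Fin K) →₀ ℝ}

/-- Prices of zero mass need no filtering: they contribute `Finsupp.single _ 0 = 0`. -/
noncomputable def revDirectSeg (σ : ((Fin K → ℝ) × Fin K) →₀ ℝ) :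
    ((Fin K → ℝ) × Fin K) →₀ ℝ :=
  ∑ k, Finsupp.single (revCondMarket σ k, k) (revMass σ k)

theorem revDirectSeg_apply (p : (Fin K → ℝ) × Fin K) :
    revDirectSeg σ p = if p.1 = revCondMarket σ p.2 then revMass σ p.2 else 0 := by
  simp only [revDirectSeg, Finsupp.finsetSum_apply, Finsupp.single_apply]
  rw [Fintype.sum_eq_single p.2 fun k hk => if_neg fun h => hk (congrArg Prod.snd h)]
  simp [Prod.ext_iff, eq_comm]

theorem mem_support_revDirectSeg {p : (Fin K → ℝ) × Fin K} :
    p ∈ (revDirectSeg σ).support ↔ p.1 = revCondMarket σ p.2 ∧ revMass σ p.2 ≠ 0 := by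
  rw [Finsupp.mem_support_iff, revDirectSeg_apply]
  split_ifs <;> simp [*]

theorem sum_support_revDirectSeg {M : Type*} [AddCommMonoid M]
    (h : (Fin K → ℝ) × Fin K → ℝ → M) (h_zero : ∀ p, h p 0 = 0)
    (h_add : ∀ p b₁ b₂, h p (b₁ + b₂) = h p b₁ + h p b₂) :
    ∑ p ∈ (revDirectSeg σ).support, h p (revDirectSeg σ p) =
      ∑ k, h (revCondMarket σ k, k) (revMass σ k) := by
  change (revDirectSeg σ).sum h = _
  rw [revDirectSeg, ← Finsupp.sum_finsetSum_index h_zero h_add]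
  exact sum_congr rfl fun k _ => Finsupp.sum_single_index (h_zero _)

theorem revDirectSeg_nonneg (hσ : ∀ p, 0 ≤ σ p) (p : (Fin K → ℝ) × Fin K) :
    0 ≤ revDirectSeg σ p := by
  rw [revDirectSeg_apply]
  split_ifs
  exacts [revMass_nonneg hσ _, le_rfl]

theorem support_revDirectSeg (hσ : ∀ p, 0 ≤ σ p) :
    (revDirectSeg σ).support =
      image (fun k => (revCondMarket σ k, k)) (univ.filter fun k => 0 < revMass σ k) := by
  ext ⟨x, k⟩
  simp only [mem_support_revDirectSeg, mem_image, mem_filter, mem_univ, true_and, Prod.ext_iff,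
    (revMass_nonneg hσ _).lt_iff_ne']
  constructor
  · rintro ⟨rfl, hk⟩
    exact ⟨k, hk, rfl, rfl⟩
  · rintro ⟨k, hk, rfl, rfl⟩
    exact ⟨rfl, hk⟩

theorem IsRevisedSeg.revDirectSeg (hσ : IsRevisedSeg xstar σ) :
    IsRevisedSeg xstar (revDirectSeg σ) := by
  obtain ⟨hnn, hsum, hmkt, hbar⟩ := hσ
  refine ⟨revDirectSeg_nonneg hnn, ?_, fun p hp => ?_, ?_⟩
  · rw [sum_support_revDirectSeg (fun _ b => b) (fun _ => rfl) fun _ _ _ => rfl, sum_revMass, hsum]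
  · obtain ⟨hx, hk⟩ := mem_support_revDirectSeg.1 hp
    rw [hx]
    exact isMarket_revCondMarket hnn hmkt ((revMass_nonneg hnn _).lt_of_ne' hk)
  · rw [sum_support_revDirectSeg (fun p b => b • p.1) (fun _ => zero_smul _ _)
      fun _ _ _ => add_smul _ _ _, sum_revMass_smul_revCondMarket hnn, hbar]

theorem IsOptimalRevised.revDirectSeg (hσ : ∀ p, 0 ≤ σ p) (hopt : IsOptimalRevised v σ) :
    IsOptimalRevised v (revDirectSeg σ) := fun p hp => by
  rw [(mem_support_revDirectSeg.1 hp).1]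
  exact optPrice_revCondMarket hσ hopt p.2

theorem revisedJoint_revDirectSeg (hσ : ∀ p, 0 ≤ σ p) (j k : Fin K) :
    revisedJoint (revDirectSeg σ) j k = revisedJoint σ j k := by
  rw [revisedJoint, sum_filter,
    sum_support_revDirectSeg (fun p b => if p.2 = k then b * p.1 j else 0) (fun _ => by simp)
      fun _ _ _ => by split_ifs <;> ring]
  simp only [sum_ite_eq', mem_univ, if_true]
  exact (revisedJoint_eq_revMass_mul hσ j k).symm

end RevDirectSeg

theorem stmt15_general {K : ℕ} (v : Fin K → ℝ)
    (xstar : Fin K → ℝ)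
    (σ : ((Fin K → ℝ) × Fin K) →₀ ℝ)
    (hσ : IsRevisedSeg xstar σ) (hoptσ : IsOptimalRevised v σ) :
    ∃ σ' : ((Fin K → ℝ) × Fin K) →₀ ℝ,
      IsRevisedSeg xstar σ' ∧ IsOptimalRevised v σ' ∧
      (∀ p ∈ σ'.support, ∀ q ∈ σ'.support, p.2 = q.2 → p = q) ∧
      σ'.support = Finset.image (fun k => (revCondMarket σ k, k))
          (Finset.univ.filter fun k => 0 < revMass σ k) ∧
      (∀ k, 0 < revMass σ k → σ' (revCondMarket σ k, k) = revMass σ k) ∧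
      (∀ j k, revisedJoint σ' j k = revisedJoint σ j k) := by
  refine ⟨revDirectSeg σ, hσ.revDirectSeg, hoptσ.revDirectSeg hσ.1, fun p hp q hq hpq => ?_,
    support_revDirectSeg hσ.1, fun k _ => ?_, revisedJoint_revDirectSeg hσ.1⟩
  · rw [Prod.ext_iff, (mem_support_revDirectSeg.1 hp).1, (mem_support_revDirectSeg.1 hq).1, hpq]
    exact ⟨rfl, rfl⟩
  · rw [revDirectSeg_apply, if_pos rfl]

theorem stmt15 {K : ℕ} (hK : 2 ≤ K) (v : Fin K → ℝ)
    (hv0 : ∀ k, 0 < v k) (hv : StrictMono v)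
    (xstar : Fin K → ℝ) (hxstar : IsMarket K xstar) (hxpos : ∀ k, 0 < xstar k)
    (σ : ((Fin K → ℝ) × Fin K) →₀ ℝ)
    (hσ : IsRevisedSeg xstar σ) (hoptσ : IsOptimalRevised v σ) :
    ∃ σ' : ((Fin K → ℝ) × Fin K) →₀ ℝ,
      IsRevisedSeg xstar σ' ∧ IsOptimalRevised v σ' ∧
      (∀ p ∈ σ'.support, ∀ q ∈ σ'.support, p.2 = q.2 → p = q) ∧
      σ'.support = Finset.image (fun k => (revCondMarket σ k, k))
          (Finset.univ.filter fun k => 0 < revMass σ k) ∧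
      (∀ k, 0 < revMass σ k → σ' (revCondMarket σ k, k) = revMass σ k) ∧
      (∀ j k, revisedJoint σ' j k = revisedJoint σ j k) :=
  stmt15_general v xstar σ hσ hoptσ
end
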